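/- Let $T$ be the free graded $\mathbb{Z}$-module on $\alpha, \gamma, \eta$ (degree 0) and $\beta$ (degree 1) with differential $d\beta = \gamma$. Define the universal coproduct $\psi: T \to T \otimes T$ by $\psi(\eta) = \eta\otimes\eta + \gamma\otimes\eta + \eta\otimes\gamma + \gamma\otimes\gamma$, $\psi(\gamma) = \gamma\otimes\gamma + \gamma\otimes\eta + \eta\otimes\gamma$, $\psi(\beta) = \beta\otimes\gamma + \beta\otimes\eta + \eta\otimes\beta + \alpha\otimes\alpha + \alpha\otimes\eta + \eta\otimes\alpha + \eta\otimes\eta$, $\psi(\alpha) = \alpha\otimes\alpha + \alpha\otimes\eta + \eta\otimes\alpha + \eta\otimes\eta$. Then $\psi$ is a chain map, i.e., $(d \otimes 1 + 1 \otimes d)\circ\psi = \psi \circ d$, where the tensor product differential uses the Koszul sign convention. -/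

import Mathlib

/-- Generators of the complex `T`: `a = α`, `b = β`, `c = γ`, `e = η`. -/
inductive Gen5 : Type | a | b | c | e
deriving DecidableEq

open Finsupp TensorProduct

/-- `T` is the free `ℤ`-module on `α, γ, η` (degree 0) and `β` (degree 1). -/
abbrev T5 : Type := Gen5 →₀ ℤ

/-- basis element -/
noncomputable def g5 (x : Gen5) : T5 := Finsupp.single x 1

/-- The differential: `dβ = γ`, `dα = dγ = dη = 0`. -/
noncomputable def d5 : T5 →ₗ[ℤ] T5 :=
  Finsupp.lsum ℤ fun x => LinearMap.toSpanSingleton ℤ T5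
    (match x with | .b => g5 .c | _ => 0)

/-- The Koszul sign operator `ε(x) = (-1)^{|x|} x` (only `β` has degree 1). -/
noncomputable def eps5 : T5 →ₗ[ℤ] T5 :=
  Finsupp.lsum ℤ fun x => LinearMap.toSpanSingleton ℤ T5
    (match x with | .b => -g5 .b | y => g5 y)

/-- The universal coproduct `ψ` of Statement 5. -/
noncomputable def psi5 : T5 →ₗ[ℤ] T5 ⊗[ℤ] T5 :=
  Finsupp.lsum ℤ fun x => LinearMap.toSpanSingleton ℤ (T5 ⊗[ℤ] T5)
    (match x with
     | .e => g5 .e ⊗ₜ g5 .e + g5 .c ⊗ₜ g5 .e + g5 .e ⊗ₜ g5 .c + g5 .c ⊗ₜ g5 .c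
     | .c => g5 .c ⊗ₜ g5 .c + g5 .c ⊗ₜ g5 .e + g5 .e ⊗ₜ g5 .c
     | .b => g5 .b ⊗ₜ g5 .c + g5 .b ⊗ₜ g5 .e + g5 .e ⊗ₜ g5 .b
             + g5 .a ⊗ₜ g5 .a + g5 .a ⊗ₜ g5 .e + g5 .e ⊗ₜ g5 .a + g5 .e ⊗ₜ g5 .e
     | .a => g5 .a ⊗ₜ g5 .a + g5 .a ⊗ₜ g5 .e + g5 .e ⊗ₜ g5 .a + g5 .e ⊗ₜ g5 .e)

/-- The differential on `T ⊗ T` with the Koszul sign convention: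
`d(x ⊗ y) = dx ⊗ y + (-1)^{|x|} x ⊗ dy`. -/
noncomputable def dT5 : T5 ⊗[ℤ] T5 →ₗ[ℤ] T5 ⊗[ℤ] T5 :=
  TensorProduct.map d5 LinearMap.id + TensorProduct.map eps5 d5

/-! The generators `α`, `γ`, `η` are cycles, and `ψ` sends each of them to a sum of tensors of
cycles, which `d ⊗ 1 + ε ⊗ d` kills. The only real check is at `β`: the three terms of `ψ(β)`
containing `β` contribute `γ ⊗ γ + γ ⊗ η + η ⊗ γ = ψ(γ) = ψ(dβ)`; the Koszul sign never
enters, because `β` is only ever tensored with the cycles `γ` and `η`. -/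

@[simp]
lemma d5_g5_b : d5 (g5 .b) = g5 .c := by
  simp [d5, g5]

@[simp]
lemma d5_g5_of_ne_b {x : Gen5} (hx : x ≠ .b) : d5 (g5 x) = 0 := by
  cases x <;> simp_all [d5, g5]

@[simp]
lemma eps5_g5_b : eps5 (g5 .b) = -g5 .b := by
  simp [eps5, g5]

@[simp]
lemma eps5_g5_of_ne_b {x : Gen5} (hx : x ≠ .b) : eps5 (g5 x) = g5 x := by
  cases x <;> simp_all [eps5, g5]

@[simp]
lemma dT5_tmul (x y : T5) : dT5 (x ⊗ₜ y) = d5 x ⊗ₜ y + eps5 x ⊗ₜ d5 y := rfl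

lemma psi5_g5 (x : Gen5) : psi5 (g5 x) = match x with
    | .e => g5 .e ⊗ₜ g5 .e + g5 .c ⊗ₜ g5 .e + g5 .e ⊗ₜ g5 .c + g5 .c ⊗ₜ g5 .c
    | .c => g5 .c ⊗ₜ g5 .c + g5 .c ⊗ₜ g5 .e + g5 .e ⊗ₜ g5 .c
    | .b => g5 .b ⊗ₜ g5 .c + g5 .b ⊗ₜ g5 .e + g5 .e ⊗ₜ g5 .b
            + g5 .a ⊗ₜ g5 .a + g5 .a ⊗ₜ g5 .e + g5 .e ⊗ₜ g5 .a + g5 .e ⊗ₜ g5 .e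
    | .a => g5 .a ⊗ₜ g5 .a + g5 .a ⊗ₜ g5 .e + g5 .e ⊗ₜ g5 .a + g5 .e ⊗ₜ g5 .e := by
  rw [psi5, show g5 x = single x 1 from rfl, lsum_single, LinearMap.toSpanSingleton_apply,
    one_smul]

lemma dT5_psi5_g5_b : dT5 (psi5 (g5 .b)) = psi5 (g5 .c) := by
  simp [psi5_g5]

lemma dT5_psi5_g5_of_ne_b {x : Gen5} (hx : x ≠ .b) : dT5 (psi5 (g5 x)) = 0 := by
  cases x <;> simp_all [psi5_g5]

/-- the universal coproduct `ψ` is a chain map. -/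
theorem psi5_chainMap : dT5 ∘ₗ psi5 = psi5 ∘ₗ d5 := by
  ext x
  change dT5 (psi5 (g5 x)) = psi5 (d5 (g5 x))
  by_cases hx : x = .b
  · rw [hx, dT5_psi5_g5_b, d5_g5_b]
  · rw [dT5_psi5_g5_of_ne_b hx, d5_g5_of_ne_b hx, map_zero]
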